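/- arXiv:1607.06213 — 6 statements merged into one kernel-verified Lean document; each statement's English description precedes it below -/
import Mathlib

section
/- Mixing Lemma: Let B be a complete Boolean algebra with Stone space X = St(B), let A ⊆ B be an antichain, and let {f_a : a ∈ A} be a family of continuous functions from X to the one-point compactification S² = ℂ ∪ {∞} with each f_a⁻¹[{∞}] nowhere dense. Then there exists such a function f with f ↾ O_a = f_a ↾ O_a for every a ∈ A. -/
/-!
The Stone space of a complete Boolean algebra is extremally disconnected: the closure of an open
set `U` is the clopen set `O_b` with `b` the supremum of all `c` with `O_c ⊆ U`. In an
extremally disconnected space, a continuous map from a dense open set into a compact Hausdorff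
space extends continuously to the whole space, since disjoint open sets have disjoint closures
and so every cluster point of the map at a point is a limit. Glue the `f_a` on the pairwise
disjoint sets `O_a` together with the constant `0` on the complement of the closure of their
union; this is continuous on a dense open set, and its extension is the required function. On
that dense open set the extension takes the value `∞` only inside the sets `f_a⁻¹[{∞}] ∩ O_a`,
which have empty interior, so its preimage of `∞` is nowhere dense.
-/

/-- An ultrafilter on a Boolean algebra `B`. -/
structure BoolUltrafilter (B : Type*) [BooleanAlgebra B] where
  carrier : Set B
  top_mem : ⊤ ∈ carrier
  bot_not_mem : ⊥ ∉ carrier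
  inf_mem : ∀ a b : B, a ∈ carrier → b ∈ carrier → a ⊓ b ∈ carrier
  mem_of_le : ∀ a b : B, a ∈ carrier → a ≤ b → b ∈ carrier
  mem_or_compl_mem : ∀ a : B, a ∈ carrier ∨ aᶜ ∈ carrier

/-- The basic clopen set `O_b` of the Stone space of `B`. -/
def basicOpen {B : Type*} [BooleanAlgebra B] (b : B) : Set (BoolUltrafilter B) :=
  {G | b ∈ G.carrier}

/-- The Stone topology, generated by the basic clopen sets. -/
instance stoneTopology (B : Type*) [BooleanAlgebra B] :
    TopologicalSpace (BoolUltrafilter B) :=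
  TopologicalSpace.generateFrom {S | ∃ b : B, S = basicOpen b}

open Set Filter Topology

section Glue

variable {X Y ι : Type*}

open Classical in
noncomputable def glueOn (s : Set ι) (O : ι → Set X) (f : ι → X → Y) (y₀ : Y) (x : X) : Y :=
  if hx : ∃ i ∈ s, x ∈ O i then f hx.choose x else y₀

theorem glueOn_eq_of_mem {s : Set ι} {O : ι → Set X} (hO : s.PairwiseDisjoint O)
    (f : ι → X → Y) (y₀ : Y) {i : ι} (hi : i ∈ s) {x : X} (hx : x ∈ O i) :
    glueOn s O f y₀ x = f i x := by
  have hex : ∃ j ∈ s, x ∈ O j := ⟨i, hi, hx⟩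
  rw [glueOn, dif_pos hex,
    hO.elim_set hex.choose_spec.1 hi x hex.choose_spec.2 hx]

theorem glueOn_eq_of_notMem {s : Set ι} {O : ι → Set X} (f : ι → X → Y) (y₀ : Y) {x : X}
    (hx : x ∉ ⋃ i ∈ s, O i) : glueOn s O f y₀ x = y₀ := by
  rw [mem_iUnion₂] at hx
  exact dif_neg (by simpa using hx)

end Glue

section ExtremallyDisconnected

variable {X Y ι : Type*} [TopologicalSpace X] [TopologicalSpace Y]

theorem dense_union_compl_closure (U : Set X) : Dense (U ∪ (closure U)ᶜ) := by
  refine dense_iff_closure_eq.2 (eq_univ_of_univ_subset fun x _ => ?_)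
  by_cases hx : x ∈ closure U
  · exact closure_mono subset_union_left hx
  · exact subset_closure (subset_union_right hx)

theorem ExtremallyDisconnected.exists_tendsto_nhdsWithin [ExtremallyDisconnected X]
    [CompactSpace Y] [RegularSpace Y] {A : Set X} {h : X → Y} (hA : IsOpen A) (hAd : Dense A)
    (hh : ContinuousOn h A) (x : X) : ∃ y, Tendsto h (𝓝[A] x) (𝓝 y) := by
  have := mem_closure_iff_nhdsWithin_neBot.mp (hAd x)
  obtain ⟨y, hy⟩ := exists_clusterPt_of_compactSpace (map h (𝓝[A] x))
  refine ⟨y, (closed_nhds_basis y).tendsto_right_iff.2 fun N ⟨hN, hNc⟩ => ?_⟩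
  set P := A ∩ h ⁻¹' interior N
  have hPo : IsOpen P := hh.isOpen_inter_preimage hA isOpen_interior
  have hQo : IsOpen (A ∩ h ⁻¹' Nᶜ) := hh.isOpen_inter_preimage hA hNc.isOpen_compl
  have hPQ : Disjoint P (A ∩ h ⁻¹' Nᶜ) := disjoint_left.2 fun z hzP hzQ =>
    hzQ.2 (interior_subset hzP.2)
  have hxP : x ∈ closure P := by
    have : ∃ᶠ z in 𝓝[A] x, h z ∈ interior N :=
      hy.frequently (p := (· ∈ interior N)) (interior_mem_nhds.2 hN)
    rw [frequently_nhdsWithin_iff] at this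
    exact mem_closure_iff_frequently.2 (this.mono fun z hz => ⟨hz.2, hz.1⟩)
  -- The closure of `P` is an open neighbourhood of `x` (extremal disconnectedness) which misses
  -- the closure of `A ∩ h⁻¹(Nᶜ)`.
  have hdisj := ExtremallyDisconnected.disjoint_closure_of_disjoint_isOpen hPQ hPo hQo
  filter_upwards [self_mem_nhdsWithin,
    mem_nhdsWithin_of_mem_nhds ((ExtremallyDisconnected.open_closure P hPo).mem_nhds hxP)]
    with z hzA hzP
  by_contra hzN
  exact disjoint_left.1 hdisj hzP (subset_closure ⟨hzA, hzN⟩)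

theorem ExtremallyDisconnected.exists_continuous_eqOn [ExtremallyDisconnected X]
    [CompactSpace Y] [T2Space Y] {A : Set X} {h : X → Y} (hA : IsOpen A) (hAd : Dense A)
    (hh : ContinuousOn h A) : ∃ g : X → Y, Continuous g ∧ EqOn g h A :=
  ⟨extendFrom A h, continuous_extendFrom hAd (exists_tendsto_nhdsWithin hA hAd hh),
    extendFrom_extends hh⟩

theorem continuousOn_glueOn {s : Set ι} {O : ι → Set X} (hOo : ∀ i ∈ s, IsOpen (O i))
    (hO : s.PairwiseDisjoint O) {f : ι → X → Y} (hf : ∀ i ∈ s, Continuous (f i)) (y₀ : Y) :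
    ContinuousOn (glueOn s O f y₀) ((⋃ i ∈ s, O i) ∪ (closure (⋃ i ∈ s, O i))ᶜ) := by
  rintro x (hx | hx)
  · obtain ⟨i, hi, hxi⟩ := mem_iUnion₂.1 hx
    refine ((hf i hi).continuousAt.congr ?_).continuousWithinAt
    filter_upwards [(hOo i hi).mem_nhds hxi] with z hz
    exact (glueOn_eq_of_mem hO f y₀ hi hz).symm
  · refine ((continuousAt_const : ContinuousAt (fun _ => y₀) x).congr ?_).continuousWithinAt
    filter_upwards [isClosed_closure.isOpen_compl.mem_nhds hx] with z hz
    exact (glueOn_eq_of_notMem f y₀ fun hz' => hz (subset_closure hz')).symm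

theorem ExtremallyDisconnected.exists_continuous_eqOn_of_pairwiseDisjoint
    [ExtremallyDisconnected X] [CompactSpace Y] [T2Space Y] {s : Set ι} {O : ι → Set X}
    (hOo : ∀ i ∈ s, IsOpen (O i)) (hO : s.PairwiseDisjoint O) {f : ι → X → Y}
    (hf : ∀ i ∈ s, Continuous (f i)) (y₀ : Y) :
    ∃ g : X → Y, Continuous g ∧ (∀ i ∈ s, EqOn g (f i) (O i)) ∧
      EqOn g (fun _ => y₀) (closure (⋃ i ∈ s, O i))ᶜ := by
  have hUo : IsOpen (⋃ i ∈ s, O i) := isOpen_biUnion hOo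
  obtain ⟨g, hg, hgh⟩ := exists_continuous_eqOn (hUo.union isClosed_closure.isOpen_compl)
    (dense_union_compl_closure _) (continuousOn_glueOn hOo hO hf y₀)
  refine ⟨g, hg, fun i hi x hx => ?_, fun x hx => ?_⟩
  · rw [hgh (Or.inl (mem_biUnion hi hx)), glueOn_eq_of_mem hO f y₀ hi hx]
  · rw [hgh (Or.inr hx), glueOn_eq_of_notMem f y₀ fun hx' => hx (subset_closure hx')]

theorem isNowhereDense_preimage_singleton_of_eqOn [T1Space Y] {g : X → Y} (hg : Continuous g)
    {s : Set ι} {O : ι → Set X} (hOo : ∀ i ∈ s, IsOpen (O i)) {f : ι → X → Y} {y y₀ : Y}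
    (hy₀ : y₀ ≠ y) (hf : ∀ i ∈ s, IsNowhereDense (f i ⁻¹' {y}))
    (hgf : ∀ i ∈ s, EqOn g (f i) (O i)) (hg₀ : EqOn g (fun _ => y₀) (closure (⋃ i ∈ s, O i))ᶜ) :
    IsNowhereDense (g ⁻¹' {y}) := by
  rw [(isClosed_singleton.preimage hg).isNowhereDense_iff, ← not_nonempty_iff_eq_empty]
  intro hne
  obtain ⟨x, hxW, hxU | hxV⟩ :=
    (dense_union_compl_closure _).inter_open_nonempty _ isOpen_interior hne
  · obtain ⟨i, hi, hxi⟩ := mem_iUnion₂.1 hxU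
    have hsub : interior (g ⁻¹' {y}) ∩ O i ⊆ interior (closure (f i ⁻¹' {y})) :=
      interior_maximal (fun z hz => subset_closure (by
        rw [mem_preimage, ← hgf i hi hz.2]; exact interior_subset (s := g ⁻¹' {y}) hz.1))
        (isOpen_interior.inter (hOo i hi))
    rw [hf i hi] at hsub
    exact hsub ⟨hxW, hxi⟩
  · have hxy : g x = y := interior_subset (s := g ⁻¹' {y}) hxW
    exact hy₀ ((hg₀ hxV).symm.trans hxy)

end ExtremallyDisconnected

open TopologicalSpace

namespace BoolUltrafilter

variable {B : Type*} [BooleanAlgebra B]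

theorem basicOpen_inf (a b : B) : basicOpen (a ⊓ b) = basicOpen a ∩ basicOpen b :=
  ext fun G => ⟨fun h => ⟨G.mem_of_le _ _ h inf_le_left, G.mem_of_le _ _ h inf_le_right⟩,
    fun h => G.inf_mem a b h.1 h.2⟩

theorem isTopologicalBasis_basicOpen :
    IsTopologicalBasis {S : Set (BoolUltrafilter B) | ∃ b : B, S = basicOpen b} where
  exists_subset_inter := by
    rintro _ ⟨a, rfl⟩ _ ⟨b, rfl⟩ G hG
    exact ⟨basicOpen (a ⊓ b), ⟨a ⊓ b, rfl⟩, (basicOpen_inf a b).symm ▸ hG,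
      (basicOpen_inf a b).le⟩
  sUnion_eq := sUnion_eq_univ_iff.2 fun G => ⟨basicOpen ⊤, ⟨⊤, rfl⟩, G.top_mem⟩
  eq_generateFrom := rfl

theorem isOpen_basicOpen (b : B) : IsOpen (basicOpen b) :=
  isTopologicalBasis_basicOpen.isOpen ⟨b, rfl⟩

theorem disjoint_basicOpen {a b : B} (h : a ⊓ b = ⊥) : Disjoint (basicOpen a) (basicOpen b) :=
  disjoint_left.2 fun G ha hb => G.bot_not_mem (h ▸ G.inf_mem a b ha hb)

theorem compl_basicOpen (a : B) : (basicOpen a)ᶜ = basicOpen aᶜ := by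
  refine ext fun G => ⟨fun h => (G.mem_or_compl_mem a).resolve_left h, fun h ha => ?_⟩
  exact disjoint_basicOpen inf_compl_eq_bot |>.notMem_of_mem_left ha h

theorem isClosed_basicOpen (b : B) : IsClosed (basicOpen b) := by
  rw [← isOpen_compl_iff, compl_basicOpen]
  exact isOpen_basicOpen _

def ofIsPrime (I : Order.Ideal B) (hI : I.IsPrime) : BoolUltrafilter B where
  carrier := (I : Set B)ᶜ
  top_mem := hI.top_notMem
  bot_not_mem := not_not.2 I.bot_mem
  inf_mem _ _ ha hb := hI.toPrimePair.F.inf_mem ha hb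
  mem_of_le _ _ ha hab := hI.toPrimePair.F.mem_of_le hab ha
  mem_or_compl_mem a := or_iff_not_and_not.2 fun h => hI.top_notMem <|
    sup_compl_eq_top (x := a) ▸ Order.Ideal.sup_mem (not_not.1 h.1) (not_not.1 h.2)

theorem exists_mem_of_ne_bot {b : B} (hb : b ≠ ⊥) : ∃ G : BoolUltrafilter B, b ∈ G.carrier := by
  have hdisj :
      Disjoint (Order.PFilter.principal b : Set B) (Order.Ideal.principal (⊥ : B) : Set B) :=
    disjoint_left.2 fun _ hbx hx => hb (le_bot_iff.1 (hbx.trans hx))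
  obtain ⟨I, hI, -, hbI⟩ := DistribLattice.prime_ideal_of_disjoint_filter_ideal hdisj
  exact ⟨ofIsPrime I hI, disjoint_left.1 hbI (le_refl b)⟩

section Complete

variable {B : Type*} [CompleteBooleanAlgebra B]

theorem closure_eq_basicOpen_sSup {U : Set (BoolUltrafilter B)} (hU : IsOpen U) :
    closure U = basicOpen (sSup {b : B | basicOpen b ⊆ U}) := by
  refine (closure_minimal ?_ (isClosed_basicOpen _)).antisymm fun G hG => ?_
  · intro G hG
    obtain ⟨_, ⟨b, rfl⟩, hGb, hbU⟩ := isTopologicalBasis_basicOpen.exists_subset_of_mem_open hG hU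
    exact G.mem_of_le _ _ hGb (le_sSup hbU)
  rw [isTopologicalBasis_basicOpen.mem_closure_iff]
  rintro _ ⟨e, rfl⟩ hGe
  have hne : e ⊓ sSup {b : B | basicOpen b ⊆ U} ≠ ⊥ := fun h =>
    G.bot_not_mem (h ▸ G.inf_mem _ _ hGe hG)
  rw [inf_sSup_eq, Ne, iSup₂_eq_bot] at hne
  push Not at hne
  obtain ⟨b, hbU, hb⟩ := hne
  obtain ⟨H, hH⟩ := exists_mem_of_ne_bot hb
  have hH' : H ∈ basicOpen (e ⊓ b) := hH
  rw [basicOpen_inf] at hH'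
  exact ⟨H, hH'.1, hbU hH'.2⟩

instance : ExtremallyDisconnected (BoolUltrafilter B) where
  open_closure _ hU := closure_eq_basicOpen_sSup hU ▸ isOpen_basicOpen _

end Complete

end BoolUltrafilter

open OnePoint in
/-- Mixing Lemma: given an antichain `A` in a complete Boolean algebra `B` and a family
of functions `f a ∈ C⁺(St(B))` for `a ∈ A`, there is a single `f ∈ C⁺(St(B))` with
`f ↾ O_a = f_a ↾ O_a` for every `a ∈ A`. -/
theorem mixing_lemma
    {B : Type*} [CompleteBooleanAlgebra B] (A : Set B)
    (hanti : A.Pairwise fun a b => a ⊓ b = ⊥)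
    (f : B → BoolUltrafilter B → OnePoint ℂ)
    (hf : ∀ a ∈ A, Continuous (f a) ∧ IsNowhereDense ((f a) ⁻¹' {(∞ : OnePoint ℂ)})) :
    ∃ g : BoolUltrafilter B → OnePoint ℂ,
      Continuous g ∧ IsNowhereDense (g ⁻¹' {(∞ : OnePoint ℂ)}) ∧
      ∀ a ∈ A, ∀ G ∈ basicOpen a, g G = f a G := by
  have hopen : ∀ a ∈ A, IsOpen (basicOpen a) := fun a _ => BoolUltrafilter.isOpen_basicOpen a
  obtain ⟨g, hg, hgf, hg₀⟩ :=
    ExtremallyDisconnected.exists_continuous_eqOn_of_pairwiseDisjoint hopen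
      (hanti.mono' fun _ _ => BoolUltrafilter.disjoint_basicOpen) (fun a ha => (hf a ha).1)
      ((0 : ℂ) : OnePoint ℂ)
  exact ⟨g, hg, isNowhereDense_preimage_singleton_of_eqOn hg hopen (coe_ne_infty 0)
    (fun a ha => (hf a ha).2) hgf hg₀, fun a ha _ hG => hgf a ha hG⟩
end

section
/- Let X be compact Hausdorff extremally disconnected and p ∈ X. The ring of germs at p of C⁺(X) is a field: for every f ∈ C⁺(X) whose germ at p is nonzero (i.e., there is no neighborhood of p on which f vanishes on a comeager set), there exist g ∈ C⁺(X) and a neighborhood U of p such that f(x)·g(x) = 1 on a comeager subset of U. -/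
/-!
The zero set `Z` of `f` is closed, and in an extremally disconnected space the closure of its
interior is a clopen set `C ⊆ Z` with `Z \ C` nowhere dense. A nonzero germ at `p` forces
`p ∉ C`. Since `C` is clopen, the pointwise inverse `1 / f` on the sphere, replaced by `0` on `C`,
is continuous; it is infinite only on `Z \ C`, and `f · (1 / f) = 1` on `Cᶜ` off the nowhere
dense set `(Z \ C) ∪ f⁻¹(∞)`.
-/

open OnePoint Filter Topology Set Bornology

section OnePointInv

variable {𝕜 : Type*} [NormedDivisionRing 𝕜]

open Classical in
noncomputable def onePointInv : OnePoint 𝕜 → OnePoint 𝕜 :=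
  fun x => x.elim ((0 : 𝕜) : OnePoint 𝕜) fun z => if z = 0 then ∞ else ↑z⁻¹

@[simp]
lemma onePointInv_infty : onePointInv (∞ : OnePoint 𝕜) = ((0 : 𝕜) : OnePoint 𝕜) := rfl

@[simp]
lemma onePointInv_coe_zero : onePointInv ((0 : 𝕜) : OnePoint 𝕜) = ∞ := by
  simp [onePointInv]

lemma onePointInv_coe_of_ne_zero {z : 𝕜} (hz : z ≠ 0) :
    onePointInv (z : OnePoint 𝕜) = ↑z⁻¹ := by
  simp [onePointInv, hz]

lemma onePointInv_eq_infty_iff {x : OnePoint 𝕜} :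
    onePointInv x = ∞ ↔ x = ((0 : 𝕜) : OnePoint 𝕜) := by
  induction x using OnePoint.rec with
  | infty => simp
  | coe z => by_cases hz : z = 0 <;> simp [onePointInv, hz]

lemma exists_coe_mul_onePointInv_eq_one {x : OnePoint 𝕜} (h₀ : x ≠ ((0 : 𝕜) : OnePoint 𝕜))
    (h_infty : x ≠ ∞) : ∃ z w : 𝕜, x = z ∧ onePointInv x = w ∧ z * w = 1 := by
  obtain ⟨z, rfl⟩ := ne_infty_iff_exists.1 h_infty
  have hz : z ≠ 0 := by rintro rfl; exact h₀ rfl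
  exact ⟨z, z⁻¹, rfl, onePointInv_coe_of_ne_zero hz, mul_inv_cancel₀ hz⟩

lemma eventuallyEq_onePointInv_coe {l : Filter 𝕜} (hl : ∀ᶠ z in l, z ≠ 0) :
    (fun z : 𝕜 => onePointInv (z : OnePoint 𝕜)) =ᶠ[l] fun z => ↑z⁻¹ :=
  hl.mono fun _ => onePointInv_coe_of_ne_zero

lemma continuous_onePointInv [ProperSpace 𝕜] : Continuous (onePointInv (𝕜 := 𝕜)) := by
  rw [OnePoint.continuous_iff, onePointInv_infty, coclosedCompact_eq_cocompact,
    ← Metric.cobounded_eq_cocompact]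
  refine ⟨?_, continuous_iff_continuousAt.2 fun z => ?_⟩
  · refine (Tendsto.congr' (eventuallyEq_onePointInv_coe ?_).symm ?_)
    · exact eventually_ne_cobounded 0
    · exact (continuous_coe.tendsto 0).comp tendsto_inv₀_cobounded
  by_cases hz : z = 0
  · subst hz
    rw [← continuousWithinAt_compl_self, ContinuousWithinAt, onePointInv_coe_zero]
    refine Tendsto.congr' (eventuallyEq_onePointInv_coe self_mem_nhdsWithin).symm ?_
    exact tendsto_coe_infty.comp <| tendsto_inv₀_nhdsNE_zero.mono_right
      (Metric.cobounded_le_cocompact.trans cocompact_le_coclosedCompact)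
  · refine ContinuousAt.congr ?_ (eventuallyEq_onePointInv_coe (eventually_ne_nhds hz)).symm
    exact continuous_coe.continuousAt.comp (continuousAt_inv₀ hz)

end OnePointInv

lemma IsClosed.isNowhereDense_frontier {X : Type*} [TopologicalSpace X] {s : Set X}
    (hs : IsClosed s) : IsNowhereDense (frontier s) :=
  isClosed_frontier.isNowhereDense_iff.2 (interior_frontier hs)

lemma IsClosed.exists_isClopen_subset_isNowhereDense_diff {X : Type*} [TopologicalSpace X]
    [ExtremallyDisconnected X] {Z : Set X} (hZ : IsClosed Z) :
    ∃ C, IsClopen C ∧ C ⊆ Z ∧ IsNowhereDense (Z \ C) := by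
  refine ⟨closure (interior Z), ⟨isClosed_closure,
    ExtremallyDisconnected.open_closure _ isOpen_interior⟩,
    closure_minimal interior_subset hZ, hZ.isNowhereDense_frontier.mono ?_⟩
  rw [hZ.frontier_eq]
  exact sdiff_subset_sdiff_right subset_closure

theorem germ_field_general
    {X : Type*} [TopologicalSpace X]
    [ExtremallyDisconnected X] (p : X)
    (f : X → OnePoint ℂ) (hf : Continuous f)
    (hf' : IsNowhereDense (f ⁻¹' {(∞ : OnePoint ℂ)}))
    (hnz : ¬ ∃ U ∈ nhds p, IsMeagre (U \ {x | f x = OnePoint.some 0})) :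
    ∃ (g : X → OnePoint ℂ) (U : Set X),
      Continuous g ∧ IsNowhereDense (g ⁻¹' {(∞ : OnePoint ℂ)}) ∧ U ∈ nhds p ∧
      IsMeagre (U \ {x | ∃ z w : ℂ,
        f x = OnePoint.some z ∧ g x = OnePoint.some w ∧ z * w = 1}) := by
  classical
  obtain ⟨C, hC, hCZ, hZC⟩ := (isClosed_singleton.preimage hf :
    IsClosed (f ⁻¹' {((0 : ℂ) : OnePoint ℂ)})).exists_isClopen_subset_isNowhereDense_diff
  have hpC : p ∉ C := fun hp =>
    hnz ⟨C, hC.isOpen.mem_nhds hp, sdiff_eq_empty.2 hCZ ▸ IsMeagre.empty⟩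
  set g : X → OnePoint ℂ := C.piecewise (fun _ => ((0 : ℂ) : OnePoint ℂ)) (onePointInv ∘ f)
  have hg : Continuous g :=
    continuous_const.piecewise (by simp [hC.frontier_eq]) (continuous_onePointInv.comp hf)
  have hg_infty : g ⁻¹' {∞} ⊆ f ⁻¹' {((0 : ℂ) : OnePoint ℂ)} \ C := by
    intro x hx
    by_cases hxC : x ∈ C
    · simp [g, hxC] at hx
    · simpa [g, hxC, onePointInv_eq_infty_iff] using hx
  refine ⟨g, Cᶜ, hg, hZC.mono hg_infty, hC.isClosed.isOpen_compl.mem_nhds hpC,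
    (hZC.isMeagre.union hf'.isMeagre).mono ?_⟩
  rintro x ⟨hxC, hx⟩
  by_contra! h
  simp only [mem_union, Set.mem_sdiff, mem_preimage, mem_singleton_iff, not_or] at h
  obtain ⟨z, w, hz, hw, hzw⟩ :=
    exists_coe_mul_onePointInv_eq_one (fun h₀ => h.1 ⟨h₀, hxC⟩) h.2
  have hgx : g x = onePointInv (f x) := piecewise_eq_of_notMem _ _ _ hxC
  exact hx ⟨z, w, hz, hgx.trans hw, hzw⟩

/-- The ring of germs of `C⁺(X)` at a point `p` is a field: if the germ of `f` at `p` is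
nonzero (there is no neighborhood of `p` on which `f` vanishes on a comeager set), then
there are `g ∈ C⁺(X)` and a neighborhood `U` of `p` with `f x * g x = 1` on a comeager
subset of `U`. -/
theorem germ_field
    {X : Type*} [TopologicalSpace X] [CompactSpace X] [T2Space X]
    [ExtremallyDisconnected X] (p : X)
    (f : X → OnePoint ℂ) (hf : Continuous f)
    (hf' : IsNowhereDense (f ⁻¹' {(∞ : OnePoint ℂ)}))
    (hnz : ¬ ∃ U ∈ nhds p, IsMeagre (U \ {x | f x = OnePoint.some 0})) :
    ∃ (g : X → OnePoint ℂ) (U : Set X),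
      Continuous g ∧ IsNowhereDense (g ⁻¹' {(∞ : OnePoint ℂ)}) ∧ U ∈ nhds p ∧
      IsMeagre (U \ {x | ∃ z w : ℂ,
        f x = OnePoint.some z ∧ g x = OnePoint.some w ∧ z * w = 1}) :=
  germ_field_general p f hf hf' hnz
end

section
/- Soundness for Boolean-valued models: if M is a B-valued model for a language L, b ∈ B, each sentence in an L-theory T has Boolean value ≥ b in M, and φ is an L-sentence provable from T, then the Boolean value of φ in M is ≥ b. -/
open FirstOrder

/-- A `B`-valued model for a first-order language `L` with domain `M`: a Boolean-valued
equality, Boolean-valued interpretations of the relation symbols, interpretations of the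
function symbols, satisfying the congruence axioms of Boolean-valued models. -/
structure BVStruct (L : Language) (B : Type*) [CompleteBooleanAlgebra B] (M : Type*) where
  eqv : M → M → B
  relMap : ∀ {n : ℕ}, L.Relations n → (Fin n → M) → B
  funMap : ∀ {n : ℕ}, L.Functions n → (Fin n → M) → M
  eqv_refl : ∀ a : M, eqv a a = ⊤
  eqv_symm : ∀ a b : M, eqv a b = eqv b a
  eqv_trans : ∀ a b c : M, eqv a b ⊓ eqv b c ≤ eqv a c
  rel_congr : ∀ {n : ℕ} (R : L.Relations n) (x y : Fin n → M),
    (⨅ i, eqv (x i) (y i)) ⊓ relMap R x ≤ relMap R y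
  fun_congr : ∀ {n : ℕ} (F : L.Functions n) (x y : Fin n → M),
    (⨅ i, eqv (x i) (y i)) ≤ eqv (funMap F x) (funMap F y)

namespace BVStruct

variable {L : Language} {B M : Type*} [CompleteBooleanAlgebra B]

/-- Evaluation of a term in a `B`-valued model. -/
def realizeTerm (S : BVStruct L B M) {α : Type*} (v : α → M) : L.Term α → M
  | .var a => v a
  | .func F ts => S.funMap F fun i => S.realizeTerm v (ts i)

/-- The Boolean value of a bounded formula in a `B`-valued model, with free variables
interpreted by `v` and bound ones by `xs`. -/
def val (S : BVStruct L B M) {α : Type*} :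
    ∀ {n : ℕ}, L.BoundedFormula α n → (α → M) → (Fin n → M) → B
  | _, .falsum, _, _ => ⊥
  | _, .equal t₁ t₂, v, xs =>
      S.eqv (S.realizeTerm (Sum.elim v xs) t₁) (S.realizeTerm (Sum.elim v xs) t₂)
  | _, .rel R ts, v, xs => S.relMap R fun i => S.realizeTerm (Sum.elim v xs) (ts i)
  | _, .imp φ ψ, v, xs => S.val φ v xs ⇨ S.val ψ v xs
  | _, .all φ, v, xs => ⨅ a : M, S.val φ v (Fin.snoc xs a)

/-- The Boolean value of a sentence. -/
def sval (S : BVStruct L B M) (φ : L.Sentence) : B :=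
  S.val φ Empty.elim (fun i => i.elim0)

end BVStruct

/-!
If `b ≰ ⟦φ⟧`, then `c := b \ ⟦φ⟧ ≠ ⊥`, and by compactness it is enough to show that a countable
set `Γ` of sentences whose values all lie above a nonzero `c` has a two-valued model.

Pick a countable `W ⊆ M`, closed under the function symbols of `Γ`, and a countable set of
conditions containing `c`, such that whenever a condition `e` is not below
`⟦∀ x, θ(zs, x)⟧ = ⨅ a, ⟦θ(zs, a)⟧` with `zs` in `W` and `∀ x, θ` a subformula of `Γ`, some
`a ∈ W` refutes it (`e \ ⟦θ(zs, a)⟧ ≠ ⊥`) and the refined condition `e \ ⟦θ(zs, a)⟧` is again a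
condition. The Rasiowa–Sikorski lemma then gives a descending sequence of nonzero conditions
starting at `c` that meets each of the countably many dense sets deciding these infima, and any
prime ideal `J` avoiding that sequence commutes with all of them: `⨅ a, ⟦θ(zs, a)⟧ ∉ J` as soon
as `⟦θ(zs, a)⟧ ∉ J` for every `a ∈ W`. Dividing `W` by `a ~ b :↔ ⟦a = b⟧ ∉ J` gives a two-valued
structure in which a sentence of `Γ` holds iff its value is not in `J`; as `c ∉ J`, it is a
model of `Γ`.
-/

open Set

namespace Order.Ideal

section BooleanAlgebra

variable {B : Type*} [BooleanAlgebra B] {I : Ideal B} {x y : B}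

theorem IsPrime.compl_mem_iff (hI : I.IsPrime) : xᶜ ∈ I ↔ x ∉ I :=
  ⟨hI.toIsProper.notMem_of_compl_mem, hI.compl_mem_of_notMem⟩

theorem IsPrime.himp_mem_iff (hI : I.IsPrime) : x ⇨ y ∈ I ↔ x ∉ I ∧ y ∈ I := by
  rw [himp_eq, sup_mem_iff, hI.compl_mem_iff, and_comm]

theorem exists_isPrime_notMem_of_directed {ι : Type*} [Nonempty ι] {d : ι → B}
    (hd : Directed (· ≥ ·) d) (hne : ∀ i, d i ≠ ⊥) :
    ∃ J : Ideal B, J.IsPrime ∧ ∀ i, d i ∉ J := by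
  have hI : IsIdeal {x | ∃ i, x ≤ (d i)ᶜ} :=
    ⟨fun x y hyx ⟨i, hi⟩ => ⟨i, hyx.trans hi⟩, ⟨⊥, Classical.arbitrary ι, bot_le⟩,
      fun x ⟨i, hi⟩ y ⟨j, hj⟩ =>
        let ⟨k, hik, hjk⟩ := hd i j
        ⟨(d k)ᶜ, ⟨k, le_rfl⟩, hi.trans (compl_le_compl hik), hj.trans (compl_le_compl hjk)⟩⟩
  have hproper : hI.toIdeal.IsProper := isProper_of_notMem (p := ⊤) fun ⟨i, hi⟩ =>
    hne i (compl_eq_top.1 (top_le_iff.1 hi))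
  obtain ⟨J, hle, hJ⟩ := hproper.exists_le_maximal
  exact ⟨J, inferInstance, fun i => IsProper.notMem_of_compl_mem inferInstance (hle ⟨i, le_rfl⟩)⟩

end BooleanAlgebra

theorem IsPrime.iInf_notMem {B : Type*} [CompleteBooleanAlgebra B] {I : Ideal B}
    (hI : I.IsPrime) {ι : Type*} [Finite ι] {f : ι → B} (hf : ∀ i, f i ∉ I) : ⨅ i, f i ∉ I :=
  hI.toIsProper.notMem_of_compl_mem <| by
    rw [compl_iInf]
    exact iSup_mem fun i => hI.compl_mem_of_notMem (hf i)

end Order.Ideal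

namespace RasiowaSikorski

variable {M B : Type*} [CompleteBooleanAlgebra B] {ι κ : Type*} {n : ι → ℕ} {m : κ → ℕ}
  (f : ∀ i, (Fin (n i) → M) → M) (P : ∀ k, (Fin (m k) → M) → M → B)

noncomputable def witness [Nonempty M] (k : κ) (zs : Fin (m k) → M) (e : B) : M :=
  Classical.epsilon fun a => ¬e ≤ P k zs a

theorem witness_spec [Nonempty M] {k : κ} {zs : Fin (m k) → M} {e : B}
    (h : ¬e ≤ ⨅ a, P k zs a) : e \ P k zs (witness P k zs e) ≠ ⊥ := by
  rw [Ne, sdiff_eq_bot_iff]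
  exact Classical.epsilon_spec (p := fun a => ¬e ≤ P k zs a) (not_forall.1 (mt le_iInf h))

def closureStep [Nonempty M] (s : Set M × Set B) : Set M × Set B :=
  (s.1 ∪ (⋃ i, range fun y : Fin (n i) → s.1 => f i (Subtype.val ∘ y)) ∪
      ⋃ k, range fun p : (Fin (m k) → s.1) × s.2 => witness P k (Subtype.val ∘ p.1) p.2,
    s.2 ∪ ⋃ k, range fun p : (Fin (m k) → s.1) × s.2 =>
      (p.2 : B) \ P k (Subtype.val ∘ p.1) (witness P k (Subtype.val ∘ p.1) p.2))

theorem le_closureStep [Nonempty M] (s : Set M × Set B) : s ≤ closureStep f P s :=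
  ⟨subset_union_left.trans subset_union_left, subset_union_left⟩

theorem countable_closureStep [Nonempty M] [Countable ι] [Countable κ] {s : Set M × Set B}
    (h₁ : s.1.Countable) (h₂ : s.2.Countable) :
    (closureStep f P s).1.Countable ∧ (closureStep f P s).2.Countable := by
  have := h₁.to_subtype
  have := h₂.to_subtype
  exact ⟨(h₁.union (countable_iUnion fun _ => countable_range _)).union
    (countable_iUnion fun _ => countable_range _),
    h₂.union (countable_iUnion fun _ => countable_range _)⟩

theorem exists_countable_closed [Nonempty M] [Countable ι] [Countable κ] (a₀ : M) (c : B) :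
    ∃ (W : Set M) (C : Set B), W.Countable ∧ a₀ ∈ W ∧ c ∈ C ∧
      (∀ i (y : Fin (n i) → W), f i (Subtype.val ∘ y) ∈ W) ∧
      ∀ k (zs : Fin (m k) → W), ∀ e ∈ C,
        witness P k (Subtype.val ∘ zs) e ∈ W ∧
          e \ P k (Subtype.val ∘ zs) (witness P k (Subtype.val ∘ zs) e) ∈ C := by
  set stage : ℕ → Set M × Set B := fun N => (closureStep f P)^[N] ({a₀}, {c})
  have hmono : Monotone stage := monotone_nat_of_le_succ fun N => by
    simp only [stage, Function.iterate_succ_apply']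
    exact le_closureStep f P _
  have hcount : ∀ N, (stage N).1.Countable ∧ (stage N).2.Countable := fun N => by
    induction N with
    | zero => exact ⟨countable_singleton _, countable_singleton _⟩
    | succ N ih =>
      simp only [stage, Function.iterate_succ_apply']
      exact countable_closureStep f P ih.1 ih.2
  set W := ⋃ N, (stage N).1
  set C := ⋃ N, (stage N).2
  have htuple : ∀ {r} (y : Fin r → W), ∃ N, ∀ j, (y j : M) ∈ (stage N).1 := fun y => by
    choose N hN using fun j => mem_iUnion.1 (y j).2
    obtain ⟨N', hN'⟩ := Finite.exists_le N
    exact ⟨N', fun j => (hmono (hN' j)).1 (hN j)⟩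
  refine ⟨W, C, countable_iUnion fun N => (hcount N).1, mem_iUnion.2 ⟨0, rfl⟩,
    mem_iUnion.2 ⟨0, rfl⟩, fun i y => ?_, fun k zs e he => ?_⟩
  · obtain ⟨N, hN⟩ := htuple y
    refine mem_iUnion.2 ⟨N + 1, ?_⟩
    simp only [stage, Function.iterate_succ_apply']
    exact Or.inl (Or.inr (mem_iUnion.2 ⟨i, fun j => ⟨_, hN j⟩, rfl⟩))
  · obtain ⟨N, hN⟩ := htuple zs
    obtain ⟨N', hN'⟩ := mem_iUnion.1 he
    have hzs : ∀ j, (zs j : M) ∈ (stage (max N N')).1 := fun j =>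
      (hmono (le_max_left _ _)).1 (hN j)
    have he' : e ∈ (stage (max N N')).2 := (hmono (le_max_right _ _)).2 hN'
    constructor
    all_goals
      refine mem_iUnion.2 ⟨max N N' + 1, ?_⟩
      simp only [stage, Function.iterate_succ_apply']
      exact Or.inr (mem_iUnion.2 ⟨k, (fun j => ⟨_, hzs j⟩, ⟨e, he'⟩), rfl⟩)

def decidingSet (W : Set M) (k : κ) (zs : Fin (m k) → M) : Set B :=
  {e | e ≤ ⨅ a, P k zs a ∨ ∃ a ∈ W, e ≤ (P k zs a)ᶜ}

open Order in
theorem exists_isPrime_generic [Nonempty M] [Countable ι] [Countable κ] {c : B} (hc : c ≠ ⊥) :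
    ∃ (W : Set M) (J : Order.Ideal B), W.Nonempty ∧ J.IsPrime ∧ c ∉ J ∧
      (∀ i (y : Fin (n i) → W), f i (Subtype.val ∘ y) ∈ W) ∧
      ∀ k (zs : Fin (m k) → W), (∀ a : W, P k (Subtype.val ∘ zs) a ∉ J) →
        ⨅ a, P k (Subtype.val ∘ zs) a ∉ J := by
  obtain ⟨W, C, hW, ha₀, hc₀, hf, hwit⟩ := exists_countable_closed f P (Classical.arbitrary M) c
  let Cond := {e : Bᵒᵈ // OrderDual.ofDual e ∈ C ∧ OrderDual.ofDual e ≠ ⊥}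
  have hdense : ∀ k (zs : Fin (m k) → W) (e : Cond), ∃ e' : Cond,
      OrderDual.ofDual e'.1 ∈ decidingSet P W k (Subtype.val ∘ zs) ∧ e ≤ e' := by
    rintro k zs ⟨e, heC, he⟩
    by_cases hle : OrderDual.ofDual e ≤ ⨅ a, P k (Subtype.val ∘ zs) a
    · exact ⟨⟨e, heC, he⟩, Or.inl hle, le_rfl⟩
    · obtain ⟨hwW, hdC⟩ := hwit k zs _ heC
      exact ⟨⟨_, hdC, witness_spec P hle⟩, Or.inr ⟨_, hwW, sdiff_eq.trans_le inf_le_right⟩,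
        sdiff_le⟩
  have := hW.to_subtype
  have := Encodable.ofCountable (Σ k, Fin (m k) → W)
  let D : (Σ k, Fin (m k) → W) → Cofinal Cond := fun t =>
    ⟨{e | OrderDual.ofDual e.1 ∈ decidingSet P W t.1 (Subtype.val ∘ t.2)}, hdense t.1 t.2⟩
  let e₀ : Cond := ⟨OrderDual.toDual c, hc₀, hc⟩
  let d : ℕ → B := fun N => OrderDual.ofDual (sequenceOfCofinals e₀ D N).1
  have hd : Antitone d := fun _ _ h => sequenceOfCofinals.monotone e₀ D h
  obtain ⟨J, hJ, hdJ⟩ :=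
    Ideal.exists_isPrime_notMem_of_directed hd.directed_ge fun N => (sequenceOfCofinals e₀ D N).2.2
  refine ⟨W, J, ⟨_, ha₀⟩, hJ, hdJ 0, hf, fun k zs hzs hinf => ?_⟩
  rcases sequenceOfCofinals.encode_mem e₀ D ⟨k, zs⟩ with hle | ⟨a, ha, hle⟩
  · exact hdJ _ (J.lower hle hinf)
  · exact hdJ _ (J.lower hle (hJ.compl_mem_of_notMem (hzs ⟨a, ha⟩)))

end RasiowaSikorski

namespace FirstOrder.Language

variable {L : Language} {α : Type*}

def Term.funSymbols : L.Term α → Set (Σ n, L.Functions n)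
  | var _ => ∅
  | func f ts => insert ⟨_, f⟩ (⋃ i, (ts i).funSymbols)

theorem Term.finite_funSymbols : ∀ t : L.Term α, t.funSymbols.Finite
  | var _ => finite_empty
  | func _ ts => (finite_iUnion fun i => (ts i).finite_funSymbols).insert _

namespace BoundedFormula

def funSymbols : ∀ {n}, L.BoundedFormula α n → Set (Σ n, L.Functions n)
  | _, falsum => ∅
  | _, equal t₁ t₂ => t₁.funSymbols ∪ t₂.funSymbols
  | _, rel _ ts => ⋃ i, (ts i).funSymbols
  | _, imp φ ψ => φ.funSymbols ∪ ψ.funSymbols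
  | _, all φ => φ.funSymbols

theorem finite_funSymbols : ∀ {n} (φ : L.BoundedFormula α n), φ.funSymbols.Finite
  | _, falsum => finite_empty
  | _, equal t₁ t₂ => t₁.finite_funSymbols.union t₂.finite_funSymbols
  | _, rel _ ts => finite_iUnion fun i => (ts i).finite_funSymbols
  | _, imp φ ψ => φ.finite_funSymbols.union ψ.finite_funSymbols
  | _, all φ => φ.finite_funSymbols

def forallBodies : ∀ {n}, L.BoundedFormula α n → Set (Σ m, L.BoundedFormula α (m + 1))
  | _, imp φ ψ => φ.forallBodies ∪ ψ.forallBodies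
  | _, all φ => insert ⟨_, φ⟩ φ.forallBodies
  | _, _ => ∅

theorem finite_forallBodies : ∀ {n} (φ : L.BoundedFormula α n), φ.forallBodies.Finite
  | _, falsum => finite_empty
  | _, equal _ _ => finite_empty
  | _, rel _ _ => finite_empty
  | _, imp φ ψ => φ.finite_forallBodies.union ψ.finite_forallBodies
  | _, all φ => φ.finite_forallBodies.insert _

end BoundedFormula

end FirstOrder.Language

namespace BVStruct

open FirstOrder.Language

variable {L : Language} {B M : Type*} [CompleteBooleanAlgebra B]

section Ultraquotient

variable (S : BVStruct L B M) (J : Order.Ideal B) [hJ : J.IsPrime] (W : Set M)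

def kerSetoid : Setoid W where
  r a b := S.eqv a b ∉ J
  iseqv :=
    ⟨fun a => by rw [S.eqv_refl]; exact hJ.top_notMem, fun h => by rwa [S.eqv_symm],
      fun h₁ h₂ h => (hJ.mem_or_mem (J.lower (S.eqv_trans _ _ _) h)).elim h₁ h₂⟩

abbrev Ultraquotient : Type _ := Quotient (S.kerSetoid J W)

variable {S J W}

def Ultraquotient.mk (a : W) : S.Ultraquotient J W := Quotient.mk _ a

noncomputable def Ultraquotient.out (q : S.Ultraquotient J W) : W := Quotient.out q

variable (S J W)

instance [Nonempty W] : Nonempty (S.Ultraquotient J W) := ⟨.mk (Classical.arbitrary W)⟩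

open Classical in
noncomputable instance [Nonempty W] : L.Structure (S.Ultraquotient J W) where
  funMap F q :=
    if h : S.funMap F (fun i => ((q i).out : M)) ∈ W then .mk ⟨_, h⟩
    else Classical.arbitrary _ -- junk, unused for symbols under which `W` is closed
  RelMap R q := S.relMap R (fun i => ((q i).out : M)) ∉ J

end Ultraquotient

variable {S : BVStruct L B M} {J : Order.Ideal B} {W : Set M}

theorem relMap_notMem_of_eqv_notMem (hJ : J.IsPrime) {n} (R : L.Relations n) {x y : Fin n → M}
    (hxy : ∀ i, S.eqv (x i) (y i) ∉ J) (hx : S.relMap R x ∉ J) : S.relMap R y ∉ J := fun hy =>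
  (hJ.mem_or_mem (J.lower (S.rel_congr R x y) hy)).elim (hJ.iInf_notMem hxy) hx

theorem realizeTerm_mem {α : Type*} {FS : Set (Σ n, L.Functions n)}
    (hW : ∀ q ∈ FS, ∀ y : Fin q.1 → W, S.funMap q.2 (Subtype.val ∘ y) ∈ W)
    {t : L.Term α} (ht : t.funSymbols ⊆ FS) (v : α → W) :
    S.realizeTerm (Subtype.val ∘ v) t ∈ W := by
  induction t with
  | var a => exact (v a).2
  | func F ts ih =>
    exact hW ⟨_, F⟩ (ht (mem_insert _ _)) fun i =>
      ⟨_, ih i ((subset_iUnion _ i).trans ((subset_insert _ _).trans ht))⟩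

namespace Ultraquotient

variable [hJ : J.IsPrime]

theorem mk_eq_mk {a b : W} : (mk a : S.Ultraquotient J W) = mk b ↔ S.eqv a b ∉ J :=
  Quotient.eq

theorem forall_mk {p : S.Ultraquotient J W → Prop} : (∀ q, p q) ↔ ∀ a, p (mk a) :=
  Quotient.forall

theorem eqv_out_mk_notMem (a : W) : S.eqv (mk a : S.Ultraquotient J W).out a ∉ J :=
  Quotient.mk_out (s := S.kerSetoid J W) a

variable [Nonempty W]

theorem funMap_mk {n} {F : L.Functions n}
    (hF : ∀ y : Fin n → W, S.funMap F (Subtype.val ∘ y) ∈ W) (y : Fin n → W) :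
    Structure.funMap F (mk ∘ y : Fin n → S.Ultraquotient J W) = mk ⟨_, hF y⟩ := by
  have hmem : S.funMap F (fun i => ((mk ∘ y) i : S.Ultraquotient J W).out.1) ∈ W := hF _
  rw [show Structure.funMap F (mk ∘ y : Fin n → S.Ultraquotient J W) = mk ⟨_, hmem⟩ from
    dif_pos hmem, mk_eq_mk]
  exact fun h => hJ.iInf_notMem (fun i => eqv_out_mk_notMem (y i)) (J.lower (S.fun_congr F _ _) h)

theorem relMap_mk {n} (R : L.Relations n) (y : Fin n → W) :
    Structure.RelMap R (mk ∘ y : Fin n → S.Ultraquotient J W) ↔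
      S.relMap R (Subtype.val ∘ y) ∉ J :=
  ⟨relMap_notMem_of_eqv_notMem hJ R fun i => eqv_out_mk_notMem (y i),
    relMap_notMem_of_eqv_notMem hJ R fun i => by rw [S.eqv_symm]; exact eqv_out_mk_notMem (y i)⟩

variable {α : Type*} {FS : Set (Σ n, L.Functions n)}

theorem realize_mk (hW : ∀ q ∈ FS, ∀ y : Fin q.1 → W, S.funMap q.2 (Subtype.val ∘ y) ∈ W)
    {t : L.Term α} (ht : t.funSymbols ⊆ FS) (v : α → W) :
    t.realize (mk ∘ v : α → S.Ultraquotient J W) = mk ⟨_, realizeTerm_mem hW ht v⟩ := by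
  induction t with
  | var a => rfl
  | func F ts ih =>
    have hts : ∀ i, (ts i).funSymbols ⊆ FS := fun i =>
      (subset_iUnion _ i).trans ((subset_insert _ _).trans ht)
    simp only [Term.realize, fun i => ih i (hts i)]
    exact funMap_mk (hW ⟨_, F⟩ (ht (mem_insert _ _))) fun i => ⟨_, realizeTerm_mem hW (hts i) v⟩

theorem realize_mk_iff {KS : Set (Σ m, L.BoundedFormula α (m + 1))} {v : α → W}
    (hW : ∀ q ∈ FS, ∀ y : Fin q.1 → W, S.funMap q.2 (Subtype.val ∘ y) ∈ W)
    (hgen : ∀ q ∈ KS, ∀ zs : Fin q.1 → W,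
      (∀ a : W, S.val q.2 (Subtype.val ∘ v) (Fin.snoc (Subtype.val ∘ zs) a) ∉ J) →
        ⨅ a, S.val q.2 (Subtype.val ∘ v) (Fin.snoc (Subtype.val ∘ zs) a) ∉ J)
    {n} (ψ : L.BoundedFormula α n) (hF : ψ.funSymbols ⊆ FS) (hK : ψ.forallBodies ⊆ KS)
    (xs : Fin n → W) :
    ψ.Realize (mk ∘ v : α → S.Ultraquotient J W) (mk ∘ xs) ↔
      S.val ψ (Subtype.val ∘ v) (Subtype.val ∘ xs) ∉ J := by
  induction ψ with
  | falsum => simp [BoundedFormula.Realize, val, J.bot_mem]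
  | equal t₁ t₂ =>
    simp only [BoundedFormula.Realize, val, ← Sum.comp_elim,
      realize_mk hW (subset_union_left.trans hF), realize_mk hW (subset_union_right.trans hF),
      mk_eq_mk]
  | rel R ts =>
    have hts : ∀ i, (ts i).funSymbols ⊆ FS := fun i => (subset_iUnion _ i).trans hF
    have hreal : (fun i => (ts i).realize (mk ∘ Sum.elim v xs : _ → S.Ultraquotient J W)) =
        mk ∘ fun i => ⟨_, realizeTerm_mem hW (hts i) (Sum.elim v xs)⟩ :=
      funext fun i => realize_mk hW (hts i) _
    simp only [BoundedFormula.Realize, val, ← Sum.comp_elim, hreal]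
    exact relMap_mk R _
  | imp φ ψ ihφ ihψ =>
    simp only [BoundedFormula.Realize, val, hJ.himp_mem_iff,
      ihφ (subset_union_left.trans hF) (subset_union_left.trans hK),
      ihψ (subset_union_right.trans hF) (subset_union_right.trans hK)]
    tauto
  | all φ ih =>
    have hq : (⟨_, φ⟩ : Σ m, L.BoundedFormula α (m + 1)) ∈ KS := hK (mem_insert _ _)
    have key : ∀ a : W, φ.Realize (mk ∘ v) (Fin.snoc (mk ∘ xs) (mk a)) ↔
        S.val φ (Subtype.val ∘ v) (Fin.snoc (Subtype.val ∘ xs) a) ∉ J := fun a => by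
      rw [← Fin.comp_snoc, ← Fin.comp_snoc]
      exact ih hF ((subset_insert _ _).trans hK) (Fin.snoc xs a)
    rw [BoundedFormula.realize_all, forall_mk, forall_congr' key]
    exact ⟨hgen _ hq xs, fun h a ha => h (J.lower (iInf_le _ _) ha)⟩

theorem realize_sentence_iff {KS : Set (Σ m, L.BoundedFormula Empty (m + 1))}
    (hW : ∀ q ∈ FS, ∀ y : Fin q.1 → W, S.funMap q.2 (Subtype.val ∘ y) ∈ W)
    (hgen : ∀ q ∈ KS, ∀ zs : Fin q.1 → W,
      (∀ a : W, S.val q.2 Empty.elim (Fin.snoc (Subtype.val ∘ zs) a) ∉ J) →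
        ⨅ a, S.val q.2 Empty.elim (Fin.snoc (Subtype.val ∘ zs) a) ∉ J)
    (ψ : L.Sentence) (hF : ψ.funSymbols ⊆ FS) (hK : ψ.forallBodies ⊆ KS) :
    S.Ultraquotient J W ⊨ ψ ↔ S.sval ψ ∉ J := by
  have hv : Subtype.val ∘ (Empty.elim : Empty → W) = Empty.elim := funext nofun
  have hxs : Subtype.val ∘ (Fin.elim0 : Fin 0 → W) = fun i => i.elim0 := Subsingleton.elim _ _
  have hv' : (mk ∘ Empty.elim : Empty → S.Ultraquotient J W) = default := Subsingleton.elim _ _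
  have hxs' : (mk ∘ Fin.elim0 : Fin 0 → S.Ultraquotient J W) = default := Subsingleton.elim _ _
  have := realize_mk_iff (v := Empty.elim) hW (by rwa [hv]) ψ hF hK Fin.elim0
  rwa [hv, hxs, hv', hxs'] at this

end Ultraquotient

theorem val_not (S : BVStruct L B M) {α : Type*} {n} (φ : L.BoundedFormula α n) (v : α → M)
    (xs : Fin n → M) : S.val φ.not v xs = (S.val φ v xs)ᶜ :=
  himp_bot _

theorem isSatisfiable_of_le_sval [Nonempty M] (S : BVStruct L B M) {Γ : L.Theory}
    (hΓ : Γ.Countable) {c : B} (hc : c ≠ ⊥) (h : ∀ ψ ∈ Γ, c ≤ S.sval ψ) : Γ.IsSatisfiable := by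
  set FS := ⋃ ψ ∈ Γ, BoundedFormula.funSymbols ψ
  set KS := ⋃ ψ ∈ Γ, BoundedFormula.forallBodies ψ
  have := (hΓ.biUnion fun ψ _ => ψ.finite_funSymbols.countable).to_subtype
  have := (hΓ.biUnion fun ψ _ => ψ.finite_forallBodies.countable).to_subtype
  obtain ⟨W, J, hWne, hJ, hcJ, hW, hgen⟩ := RasiowaSikorski.exists_isPrime_generic (ι := FS)
    (κ := KS) (fun q => S.funMap q.1.2) (fun q zs a => S.val q.1.2 Empty.elim (Fin.snoc zs a)) hc
  have := hWne.to_subtype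
  have : S.Ultraquotient J W ⊨ Γ := (Theory.model_iff _).2 fun ψ hψ =>
    (Ultraquotient.realize_sentence_iff (fun q hq => hW ⟨q, hq⟩) (fun q hq => hgen ⟨q, hq⟩) ψ
      (subset_biUnion_of_mem hψ) (subset_biUnion_of_mem hψ)).2
      fun hψJ => hcJ (J.lower (h ψ hψ) hψJ)
  exact Theory.Model.isSatisfiable (S.Ultraquotient J W)

end BVStruct

/-- Soundness for Boolean-valued models: if every sentence of a theory `T` has Boolean
value at least `b` in a `B`-valued model `S`, and `φ` is provable from `T` (equivalently,
by Gödel completeness, a semantic consequence of `T`), then `⟦φ⟧ ≥ b` in `S`. -/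
theorem bv_soundness {L : FirstOrder.Language} {B M : Type*} [CompleteBooleanAlgebra B]
    [Nonempty M] (S : BVStruct L B M) (b : B) (T : L.Theory) (φ : L.Sentence)
    (hT : ∀ ψ ∈ T, b ≤ S.sval ψ)
    (hprov : T.ModelsBoundedFormula φ) :
    b ≤ S.sval φ := by
  by_contra hb
  have hc : b \ S.sval φ ≠ ⊥ := fun h => hb (sdiff_eq_bot_iff.1 h)
  refine (Language.Theory.models_iff_not_satisfiable φ).1 hprov <|
    Language.Theory.isSatisfiable_iff_isFinitelySatisfiable.2 fun T₀ hT₀ =>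
      S.isSatisfiable_of_le_sval T₀.countable_toSet hc fun ψ hψ => ?_
  rcases hT₀ hψ with hψ | rfl
  · exact sdiff_le.trans (hT ψ hψ)
  · exact (sdiff_eq.trans_le inf_le_right).trans_eq (S.val_not φ _ _).symm
end

section
/- Łoś theorem for full Boolean-valued models: Let M be a full B-valued model for a language L and G an ultrafilter on B. Then for every L-formula φ(x_1,…,x_n) and τ_1,…,τ_n ∈ M, the quotient structure M/G satisfies φ([τ_1]_G,…,[τ_n]_G) if and only if the Boolean value ⟦φ(τ_1,…,τ_n)⟧ belongs to G. -/
open FirstOrder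

namespace BVStruct

variable {L : FirstOrder.Language} {B M : Type*} [CompleteBooleanAlgebra B]

/-- The equivalence `τ ≡_G σ ↔ ⟦τ = σ⟧ ∈ G` used to form the quotient `M/G`. -/
def bvSetoid (S : BVStruct L B M) (G : BoolUltrafilter B) : Setoid M where
  r τ σ := S.eqv τ σ ∈ G.carrier
  iseqv := by
    refine ⟨fun τ => ?_, fun {τ σ} h => ?_, fun {τ σ χ} h₁ h₂ => ?_⟩
    · rw [S.eqv_refl]; exact G.top_mem
    · rw [S.eqv_symm]; exact h
    · exact G.mem_of_le _ _ (G.inf_mem _ _ h₁ h₂) (S.eqv_trans _ _ _)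

/-- The quotient structure `M/G`: relations hold iff their Boolean value (at chosen
representatives) lies in `G`, functions are computed on representatives. -/
noncomputable def quotStruct (S : BVStruct L B M) (G : BoolUltrafilter B) :
    FirstOrder.Language.Structure L (Quotient (S.bvSetoid G)) where
  funMap := fun {_} F qs => Quotient.mk (S.bvSetoid G) (S.funMap F fun i => (qs i).out)
  RelMap := fun {_} R qs => S.relMap R (fun i => (qs i).out) ∈ G.carrier

/-- A `B`-valued model is full if every existential Boolean value is attained. -/
def IsFull (S : BVStruct L B M) : Prop :=
  ∀ (n : ℕ) (φ : L.BoundedFormula Empty (n + 1)) (xs : Fin n → M),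
    ∃ σ : M, S.val φ.ex Empty.elim xs = S.val φ Empty.elim (Fin.snoc xs σ)

end BVStruct

/-! Induction on the formula. The congruence axioms make the atomic cases (and the quotient
structure itself) independent of representatives, and implication commutes with membership
because `G` is an ultrafilter. Only the quantifier step needs fullness: applied to `¬φ` it
yields a witness `σ` with `⟦∀x φ⟧ = ⟦φ(σ)⟧`, so `⟦∀x φ⟧ ∈ G` as soon as every instance is. -/

namespace BoolUltrafilter

variable {B : Type*} [BooleanAlgebra B] (G : BoolUltrafilter B)

theorem compl_mem_iff (a : B) : aᶜ ∈ G.carrier ↔ a ∉ G.carrier := by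
  refine ⟨fun hc ha => G.bot_not_mem ?_, (G.mem_or_compl_mem a).resolve_left⟩
  simpa using G.inf_mem a aᶜ ha hc

theorem himp_mem_iff (a b : B) :
    a ⇨ b ∈ G.carrier ↔ (a ∈ G.carrier → b ∈ G.carrier) := by
  refine ⟨fun h ha => G.mem_of_le _ _ (G.inf_mem _ _ ha h) inf_himp_le, fun h => ?_⟩
  by_cases ha : a ∈ G.carrier
  · exact G.mem_of_le _ _ (h ha) le_himp
  · exact G.mem_of_le _ _ ((G.compl_mem_iff a).2 ha) compl_le_himp

theorem iInf_mem {B : Type*} [CompleteBooleanAlgebra B] (G : BoolUltrafilter B)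
    {ι : Type*} [Fintype ι] {f : ι → B} (h : ∀ i, f i ∈ G.carrier) :
    (⨅ i, f i) ∈ G.carrier := by
  rw [← Finset.inf_univ_eq_iInf]
  exact Finset.inf_induction G.top_mem (fun a ha b hb => G.inf_mem a b ha hb) fun i _ => h i

end BoolUltrafilter

attribute [local instance] BVStruct.quotStruct

namespace BVStruct

open FirstOrder.Language

variable {L : Language} {B M : Type*} [CompleteBooleanAlgebra B]

theorem IsFull.exists_val_all_eq {S : BVStruct L B M} (hfull : S.IsFull) {n : ℕ}
    (φ : L.BoundedFormula Empty (n + 1)) (τ : Fin n → M) :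
    ∃ σ, S.val φ.all Empty.elim τ = S.val φ Empty.elim (Fin.snoc τ σ) := by
  obtain ⟨σ, hσ⟩ := hfull n φ.not τ
  refine ⟨σ, compl_injective ?_⟩
  -- `∃ x, ¬φ` is `¬∀ x, ¬¬φ`, so `hσ` reads `(⨅ a, ⟦φ(a)⟧ᶜᶜ)ᶜ = ⟦φ(σ)⟧ᶜ`.
  simpa only [BoundedFormula.ex, BoundedFormula.not, val, himp_bot, compl_compl] using hσ

theorem IsFull.val_all_mem_iff {S : BVStruct L B M} (hfull : S.IsFull) (G : BoolUltrafilter B)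
    {n : ℕ} (φ : L.BoundedFormula Empty (n + 1)) (τ : Fin n → M) :
    S.val φ.all Empty.elim τ ∈ G.carrier ↔
      ∀ a, S.val φ Empty.elim (Fin.snoc τ a) ∈ G.carrier := by
  obtain ⟨σ, hσ⟩ := hfull.exists_val_all_eq φ τ
  exact ⟨fun h a => G.mem_of_le _ _ h (iInf_le _ a), fun h => hσ ▸ h σ⟩

variable (S : BVStruct L B M) (G : BoolUltrafilter B)

theorem eqv_out_mk_mem (a : M) : S.eqv (Quotient.mk (S.bvSetoid G) a).out a ∈ G.carrier :=
  Quotient.mk_out (s := S.bvSetoid G) a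

theorem funMap_mk {n : ℕ} (F : L.Functions n) (x : Fin n → M) :
    Structure.funMap F (Quotient.mk (S.bvSetoid G) ∘ x) =
      Quotient.mk (S.bvSetoid G) (S.funMap F x) :=
  Quotient.sound <| G.mem_of_le _ _ (G.iInf_mem fun i => S.eqv_out_mk_mem G (x i))
    (S.fun_congr F _ x)

theorem relMap_mk_iff {n : ℕ} (R : L.Relations n) (x : Fin n → M) :
    Structure.RelMap R (Quotient.mk (S.bvSetoid G) ∘ x) ↔ S.relMap R x ∈ G.carrier := by
  have hout : ∀ i, S.eqv (Quotient.mk (S.bvSetoid G) (x i)).out (x i) ∈ G.carrier :=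
    fun i => S.eqv_out_mk_mem G (x i)
  have hout' : ∀ i, S.eqv (x i) (Quotient.mk (S.bvSetoid G) (x i)).out ∈ G.carrier :=
    fun i => S.eqv_symm _ _ ▸ hout i
  exact ⟨fun h => G.mem_of_le _ _ (G.inf_mem _ _ (G.iInf_mem hout) h) (S.rel_congr R _ x),
    fun h => G.mem_of_le _ _ (G.inf_mem _ _ (G.iInf_mem hout') h) (S.rel_congr R x _)⟩

theorem realize_mk {α : Type*} (v : α → M) (t : L.Term α) :
    t.realize (Quotient.mk (S.bvSetoid G) ∘ v) =
      Quotient.mk (S.bvSetoid G) (S.realizeTerm v t) := by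
  induction t with
  | var a => rfl
  | func F ts ih =>
    rw [Term.realize_func, realizeTerm, ← S.funMap_mk G]
    exact congrArg _ (funext ih)

end BVStruct

open FirstOrder.Language in
/-- Łoś's theorem for full Boolean-valued models: `M/G ⊨ φ([τ₁]_G,…,[τₙ]_G)` iff
`⟦φ(τ₁,…,τₙ)⟧ ∈ G`. -/
theorem bv_los {L : FirstOrder.Language} {B M : Type*} [CompleteBooleanAlgebra B]
    (S : BVStruct L B M) (hfull : S.IsFull) (G : BoolUltrafilter B)
    (n : ℕ) (φ : L.BoundedFormula Empty n) (τ : Fin n → M) :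
    (letI : L.Structure (Quotient (S.bvSetoid G)) := S.quotStruct G;
      φ.Realize Empty.elim (fun i => Quotient.mk (S.bvSetoid G) (τ i))) ↔
    S.val φ Empty.elim τ ∈ G.carrier := by
  have hv : ∀ {m} (xs : Fin m → M),
      Sum.elim Empty.elim (Quotient.mk (S.bvSetoid G) ∘ xs) =
        Quotient.mk (S.bvSetoid G) ∘ Sum.elim Empty.elim xs :=
    fun _ => funext (Sum.rec nofun fun _ => rfl)
  change φ.Realize Empty.elim (Quotient.mk _ ∘ τ) ↔ _
  induction φ with
  | falsum => exact iff_of_false id G.bot_not_mem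
  | equal t₁ t₂ =>
    simp only [BoundedFormula.Realize, hv, S.realize_mk, Quotient.eq]
    rfl
  | rel R ts =>
    simp only [BoundedFormula.Realize, hv, S.realize_mk]
    exact S.relMap_mk_iff G R _
  | imp φ ψ ihφ ihψ => exact (imp_congr (ihφ τ) (ihψ τ)).trans (G.himp_mem_iff _ _).symm
  | all φ ih =>
    rw [BoundedFormula.realize_all, Quotient.mk_surjective.forall, hfull.val_all_mem_iff G]
    simp only [← Fin.comp_snoc, ih]
end

section
/- A subset A of a Polish space Y (more generally of Y^n) is universally Baire—i.e., f⁻¹[A] has the Baire property in Z for every continuous f : Z → Y^n with Z compact Hausdorff—if and only if f⁻¹[A] has the Baire property for every continuous f : Z → Y^n with Z compact Hausdorff and extremally disconnected. -/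
/-!
Every compact Hausdorff space `Z` is the image of an extremally disconnected compact Hausdorff
space `E` (its Gleason cover) under a continuous surjection `ρ` that maps no proper closed subset
onto `Z`. We get `E` as a minimal closed subset of `Ultrafilter Z` mapped onto `Z`; it is a
retract of the projective space `Ultrafilter Z`, hence extremally disconnected. Such a `ρ` maps
nowhere dense sets to nowhere dense sets, hence meagre sets to meagre sets. So if `ρ⁻¹ S` differs
from an open set `V` by a meagre set, then `S` differs from the open set `Z \ ρ (E \ V)` by a
meagre set. Applied to `S = f⁻¹ A`, this reduces the Baire property of `f⁻¹ A` to that of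
`(f ∘ ρ)⁻¹ A`.
-/

universe u

/-- A set has the Baire property if it differs from an open set by a meager set. -/
def HasBaireProperty {Z : Type*} [TopologicalSpace Z] (S : Set Z) : Prop :=
  ∃ V : Set Z, IsOpen V ∧ IsMeagre (symmDiff S V)

open Set Function

section ZornSubset

variable {E A : Type*} [TopologicalSpace E] {ρ : E → A}

lemma eq_id_of_comp_eq_of_zorn_subset [T2Space E] (ρ_surj : Surjective ρ)
    (zorn_subset : ∀ E₀ : Set E, E₀ ≠ univ → IsClosed E₀ → ρ '' E₀ ≠ univ)
    {g : E → E} (hg : Continuous g) (hρg : ρ ∘ g = ρ) : g = id := by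
  funext e
  by_contra hne
  obtain ⟨U₁, U₂, hU₁, hU₂, hge, he, hdisj⟩ := t2_separation hne
  -- `g` moves `O` off itself, so `ρ` still maps `Oᶜ` onto `A`
  set O := U₂ ∩ g ⁻¹' U₁
  refine zorn_subset Oᶜ (compl_ne_univ.mpr ⟨e, he, hge⟩)
    (hU₂.inter (hU₁.preimage hg)).isClosed_compl (eq_univ_of_forall fun z => ?_)
  obtain ⟨a, rfl⟩ := ρ_surj z
  by_cases ha : a ∈ O
  · exact ⟨g a, fun hga => disjoint_left.mp hdisj ha.2 hga.1, congrFun hρg a⟩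
  · exact ⟨a, ha, rfl⟩

variable [TopologicalSpace A]

lemma IsNowhereDense.image_of_zorn_subset (ρ_cont : Continuous ρ) (ρ_surj : Surjective ρ)
    (ρ_closed : IsClosedMap ρ)
    (zorn_subset : ∀ E₀ : Set E, E₀ ≠ univ → IsClosed E₀ → ρ '' E₀ ≠ univ)
    {N : Set E} (hN : IsNowhereDense N) : IsNowhereDense (ρ '' N) := by
  set C := closure N
  set O := interior (ρ '' C)
  have hO_open : IsOpen (ρ ⁻¹' O) := isOpen_interior.preimage ρ_cont
  have h_onto : ρ '' (ρ ⁻¹' O \ C)ᶜ = univ := by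
    refine eq_univ_of_forall fun z => ?_
    obtain ⟨a, rfl⟩ := ρ_surj z
    by_cases ha : a ∈ ρ ⁻¹' O \ C
    · obtain ⟨c, hc, hca⟩ := interior_subset ha.1
      exact ⟨c, fun h => h.2 hc, hca⟩
    · exact mem_image_of_mem ρ ha
  have hOC : ρ ⁻¹' O ⊆ C := by
    rw [← sdiff_eq_empty, ← compl_univ_iff]
    by_contra hne
    exact zorn_subset _ hne (hO_open.sdiff isClosed_closure).isClosed_compl h_onto
  have hO : O = ∅ := by
    have h_empty : ρ ⁻¹' O ⊆ interior C := hO_open.subset_interior_iff.mpr hOC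
    rw [hN, subset_empty_iff] at h_empty
    rw [← ρ_surj.image_preimage O, h_empty, image_empty]
  exact subset_empty_iff.mp <| hO ▸
    interior_mono (closure_minimal (image_mono subset_closure) (ρ_closed _ isClosed_closure))

lemma IsMeagre.image_of_zorn_subset (ρ_cont : Continuous ρ) (ρ_surj : Surjective ρ)
    (ρ_closed : IsClosedMap ρ)
    (zorn_subset : ∀ E₀ : Set E, E₀ ≠ univ → IsClosed E₀ → ρ '' E₀ ≠ univ)
    {M : Set E} (hM : IsMeagre M) : IsMeagre (ρ '' M) := by
  obtain ⟨S, hS_nwd, hS_cnt, hMS⟩ := isMeagre_iff_countable_union_isNowhereDense.mp hM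
  refine isMeagre_iff_countable_union_isNowhereDense.mpr
    ⟨image ρ '' S, ?_, hS_cnt.image _, image_sUnion ▸ image_mono hMS⟩
  rintro _ ⟨t, ht, rfl⟩
  exact (hS_nwd t ht).image_of_zorn_subset ρ_cont ρ_surj ρ_closed zorn_subset

lemma HasBaireProperty.of_preimage (ρ_cont : Continuous ρ) (ρ_surj : Surjective ρ)
    (ρ_closed : IsClosedMap ρ)
    (zorn_subset : ∀ E₀ : Set E, E₀ ≠ univ → IsClosed E₀ → ρ '' E₀ ≠ univ)
    {S : Set A} (h : HasBaireProperty (ρ ⁻¹' S)) : HasBaireProperty S := by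
  obtain ⟨V, hV, hM⟩ := h
  refine ⟨(ρ '' Vᶜ)ᶜ, (ρ_closed _ hV.isClosed_compl).isOpen_compl,
    (hM.image_of_zorn_subset ρ_cont ρ_surj ρ_closed zorn_subset).mono ?_⟩
  rintro z (⟨hzS, hz⟩ | ⟨hz, hzS⟩)
  · obtain ⟨a, ha, rfl⟩ := not_not.mp hz
    exact ⟨a, Or.inl ⟨hzS, ha⟩, rfl⟩
  · obtain ⟨a, rfl⟩ := ρ_surj z
    exact ⟨a, Or.inr ⟨not_not.mp fun ha => hz ⟨a, ha, rfl⟩, hzS⟩, rfl⟩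

end ZornSubset

theorem Ultrafilter.projective (X : Type u) : CompactT2.Projective (Ultrafilter X) := by
  intro B C _ _ _ _ _ _ φ f hφ hf f_surj
  obtain ⟨s, hs⟩ := f_surj.hasRightInverse
  refine ⟨Ultrafilter.extend (s ∘ φ ∘ pure), continuous_ultrafilter_extend _,
    denseRange_pure.equalizer (hf.comp (continuous_ultrafilter_extend _)) hφ ?_⟩
  rw [comp_assoc, ultrafilter_extend_extends, ← comp_assoc, hs.comp_eq_id, id_comp]

lemma CompactT2.Projective.of_retraction {X E : Type u} [TopologicalSpace X]
    [TopologicalSpace E] (hX : CompactT2.Projective X) {r : X → E} {s : E → X}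
    (hr : Continuous r) (hs : Continuous s) (hrs : r ∘ s = id) : CompactT2.Projective E := by
  intro B C _ _ _ _ _ _ φ f hφ hf f_surj
  obtain ⟨ψ, hψ, hfψ⟩ := hX (hφ.comp hr) hf f_surj
  exact ⟨ψ ∘ s, hψ.comp hs, by rw [← comp_assoc, hfψ, comp_assoc, hrs, comp_id]⟩

theorem exists_extremallyDisconnected_zorn_subset_cover (Z : Type u) [TopologicalSpace Z]
    [CompactSpace Z] [T2Space Z] :
    ∃ (E : Type u) (_ : TopologicalSpace E) (_ : CompactSpace E) (_ : T2Space E)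
      (_ : ExtremallyDisconnected E) (ρ : E → Z), Continuous ρ ∧ Surjective ρ ∧
      ∀ E₀ : Set E, E₀ ≠ univ → IsClosed E₀ → ρ '' E₀ ≠ univ := by
  set π : Ultrafilter Z → Z := Ultrafilter.extend id
  have π_cont : Continuous π := continuous_ultrafilter_extend id
  have π_surj : Surjective π := fun z => ⟨pure z, ultrafilter_extend_pure id z⟩
  obtain ⟨D, _, D_onto, zorn_subset⟩ := exists_compact_surjective_zorn_subset π_cont π_surj
  set ρ : D → Z := D.domRestrict π
  have ρ_cont : Continuous ρ := π_cont.continuousOn.domRestrict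
  have ρ_surj : Surjective ρ := range_eq_univ.mp (by rw [range_domRestrict, D_onto])
  obtain ⟨r, hr, hρr⟩ := Ultrafilter.projective Z π_cont ρ_cont ρ_surj
  have hr_retraction : r ∘ Subtype.val = id :=
    eq_id_of_comp_eq_of_zorn_subset ρ_surj zorn_subset (hr.comp continuous_subtype_val)
      (by rw [← comp_assoc, hρr]; rfl)
  have D_proj : CompactT2.Projective D :=
    CompactT2.Projective.of_retraction (Ultrafilter.projective Z) hr continuous_subtype_val
      hr_retraction
  exact ⟨D, inferInstance, ‹_›, inferInstance, D_proj.extremallyDisconnected, ρ, ρ_cont, ρ_surj,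
    zorn_subset⟩

theorem universallyBaire_iff_extremallyDisconnected_test_general
    {Y : Type*} [TopologicalSpace Y] (A : Set Y) :
    (∀ (Z : Type u) [TopologicalSpace Z] [CompactSpace Z] [T2Space Z],
        ∀ f : Z → Y, Continuous f → HasBaireProperty (f ⁻¹' A)) ↔
    (∀ (Z : Type u) [TopologicalSpace Z] [CompactSpace Z] [T2Space Z]
        [ExtremallyDisconnected Z],
        ∀ f : Z → Y, Continuous f → HasBaireProperty (f ⁻¹' A)) := by
  refine ⟨fun H Z _ _ _ _ f hf => H Z f hf, fun H Z _ _ _ f hf => ?_⟩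
  obtain ⟨E, _, _, _, _, ρ, ρ_cont, ρ_surj, zorn_subset⟩ :=
    exists_extremallyDisconnected_zorn_subset_cover Z
  exact HasBaireProperty.of_preimage ρ_cont ρ_surj ρ_cont.isClosedMap zorn_subset
    (H E (f ∘ ρ) (hf.comp ρ_cont))

/-- A subset `A` of a Polish space `Y` is universally Baire (preimages under continuous
maps from compact Hausdorff spaces have the Baire property) if and only if its preimages
under continuous maps from compact Hausdorff *extremally disconnected* spaces have the
Baire property. -/
theorem universallyBaire_iff_extremallyDisconnected_test
    {Y : Type*} [TopologicalSpace Y] [PolishSpace Y] (A : Set Y) :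
    (∀ (Z : Type u) [TopologicalSpace Z] [CompactSpace Z] [T2Space Z],
        ∀ f : Z → Y, Continuous f → HasBaireProperty (f ⁻¹' A)) ↔
    (∀ (Z : Type u) [TopologicalSpace Z] [CompactSpace Z] [T2Space Z]
        [ExtremallyDisconnected Z],
        ∀ f : Z → Y, Continuous f → HasBaireProperty (f ⁻¹' A)) :=
  universallyBaire_iff_extremallyDisconnected_test_general A
end

section
/- Let X be compact Hausdorff extremally disconnected, Y a Polish space with a fixed Polish compactification H (e.g. the Hilbert cube), and f : X → H continuous with f⁻¹[H \ Y] meager. For H an ultrafilter point of X with f(H) ∈ Y, the singleton {f(H)} equals Y ∩ ⋂{Cl(U_n) : Int(Cl(f⁻¹[U_n])) ∈ H}, where {U_n} is a fixed countable basis of Y; moreover the intersection ⋂{Cl(U_n) : Int(Cl(f⁻¹[U_n])) ∈ H} is always nonempty. -/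
/-! `f p` lies in every `Cl(U n)` with `p ∈ Int(Cl(f⁻¹[U n]))` by continuity alone. Conversely,
if `f p ∈ Y` and `y ∈ Y` is another point, a basic `U n = V ∩ Y` around `f p` has closure
avoiding `y`; since `f⁻¹[Y]` is comeagre in the Baire space `X`, the open set `f⁻¹[V]` lies in
`Cl(f⁻¹[U n])`, so `p` is in its interior and `y` is excluded from the intersection. -/

open Set Topology

theorem Continuous.apply_mem_closure_of_mem_interior_closure_preimage
    {X H : Type*} [TopologicalSpace X] [TopologicalSpace H] {f : X → H} (hf : Continuous f)
    {s : Set H} {p : X} (hp : p ∈ interior (closure (f ⁻¹' s))) : f p ∈ closure s :=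
  hf.closure_preimage_subset s (interior_subset hp)

theorem preimage_subset_closure_preimage_inter_of_isMeagre
    {X H : Type*} [TopologicalSpace X] [BaireSpace X] [TopologicalSpace H]
    {f : X → H} (hf : Continuous f) {Y V : Set H} (hV : IsOpen V)
    (hmeager : IsMeagre (f ⁻¹' Yᶜ)) : f ⁻¹' V ⊆ closure (f ⁻¹' (V ∩ Y)) := by
  have hdense : Dense (f ⁻¹' Yᶜ)ᶜ := dense_of_mem_residual hmeager
  simpa only [preimage_inter, preimage_compl, compl_compl] using
    hdense.open_subset_closure_inter (hV.preimage hf)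

theorem exists_mem_notMem_closure_of_ne
    {H : Type*} [TopologicalSpace H] [T2Space H] {Y : Set H} {U : ℕ → Set H}
    (hbasis : ∀ y ∈ Y, ∀ V : Set H, IsOpen V → y ∈ V → ∃ n, y ∈ U n ∧ U n ⊆ V)
    {x y : H} (hx : x ∈ Y) (hxy : x ≠ y) : ∃ n, x ∈ U n ∧ y ∉ closure (U n) := by
  obtain ⟨A, B, hA, hB, hxA, hyB, hAB⟩ := t2_separation hxy
  obtain ⟨n, hxn, hnA⟩ := hbasis x hx A hA hxA
  refine ⟨n, hxn, fun hy => ?_⟩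
  exact (closure_minimal (hnA.trans hAB.subset_compl_right) hB.isClosed_compl hy) hyB

theorem value_from_ultrafilter_of_clopens_general
    {X H : Type*} [TopologicalSpace X] [CompactSpace X] [T2Space X]
    [TopologicalSpace H] [T2Space H]
    (Y : Set H)
    (U : ℕ → Set H)
    (hUopen : ∀ n, ∃ V : Set H, IsOpen V ∧ U n = V ∩ Y)
    (hbasis : ∀ y ∈ Y, ∀ V : Set H, IsOpen V → y ∈ V → ∃ n, y ∈ U n ∧ U n ⊆ V)
    (f : X → H) (hf : Continuous f) (hmeager : IsMeagre (f ⁻¹' Yᶜ)) :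
    (∀ p : X,
      (⋂ n ∈ {n : ℕ | p ∈ interior (closure (f ⁻¹' U n))}, closure (U n)).Nonempty) ∧
    (∀ p : X, f p ∈ Y →
      Y ∩ ⋂ n ∈ {n : ℕ | p ∈ interior (closure (f ⁻¹' U n))}, closure (U n) = {f p}) := by
  have hmem : ∀ p : X, f p ∈ ⋂ n ∈ {n : ℕ | p ∈ interior (closure (f ⁻¹' U n))},
      closure (U n) := fun p =>
    mem_iInter₂.mpr fun _ hn => hf.apply_mem_closure_of_mem_interior_closure_preimage hn
  refine ⟨fun p => ⟨f p, hmem p⟩, fun p hpY => ?_⟩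
  refine eq_singleton_iff_unique_mem.mpr ⟨⟨hpY, hmem p⟩, ?_⟩
  rintro y ⟨-, hy⟩
  by_contra hne
  obtain ⟨n, hpn, hyn⟩ := exists_mem_notMem_closure_of_ne hbasis hpY (Ne.symm hne)
  obtain ⟨V, hV, hUV⟩ := hUopen n
  rw [hUV] at hpn
  have hp : p ∈ interior (closure (f ⁻¹' U n)) := hUV ▸
    interior_maximal (preimage_subset_closure_preimage_inter_of_isMeagre hf hV hmeager)
      (hV.preimage hf) hpn.1
  exact hyn (mem_iInter₂.mp hy n hp)

/-- Let `X` be compact Hausdorff extremally disconnected, `H` a Polish compactification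
of a Polish subspace `Y ⊆ H` with countable basis `{U n}`, and `f : X → H` continuous
with `f⁻¹[H \ Y]` meager. Then for every point `p` of `X` (viewed as an ultrafilter of
clopen sets, so that `Int(Cl(f⁻¹[U n])) ∈ p` means `p ∈ Int(Cl(f⁻¹[U n]))`), the set
`⋂ {Cl(U n) : p ∈ Int(Cl(f⁻¹[U n]))}` is nonempty, and if `f p ∈ Y` then its
intersection with `Y` is exactly `{f p}`. -/
theorem value_from_ultrafilter_of_clopens
    {X H : Type*} [TopologicalSpace X] [CompactSpace X] [T2Space X]
    [ExtremallyDisconnected X]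
    [TopologicalSpace H] [CompactSpace H] [T2Space H] [PolishSpace H]
    (Y : Set H) (hPolY : PolishSpace Y)
    (U : ℕ → Set H) (hUY : ∀ n, U n ⊆ Y)
    (hUopen : ∀ n, ∃ V : Set H, IsOpen V ∧ U n = V ∩ Y)
    (hbasis : ∀ y ∈ Y, ∀ V : Set H, IsOpen V → y ∈ V → ∃ n, y ∈ U n ∧ U n ⊆ V)
    (f : X → H) (hf : Continuous f) (hmeager : IsMeagre (f ⁻¹' Yᶜ)) :
    (∀ p : X,
      (⋂ n ∈ {n : ℕ | p ∈ interior (closure (f ⁻¹' U n))}, closure (U n)).Nonempty) ∧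
    (∀ p : X, f p ∈ Y →
      Y ∩ ⋂ n ∈ {n : ℕ | p ∈ interior (closure (f ⁻¹' U n))}, closure (U n) = {f p}) :=
  value_from_ultrafilter_of_clopens_general Y U hUopen hbasis f hf hmeager
end
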